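/- Let |·|_c denote the cross norm on ℂ^n associated to the euclidean norm on ℝ^n, let ⟨z,ζ⟩ = Σ_j z_j ζ_j be the complex bilinear form on ℂ^n, and let |ζ| be the hermitian norm. (a) If ζ = e^{iθ}(a+ib) with θ ∈ ℝ, a, b ∈ ℝ^n, ⟨a,b⟩ = 0, and |b| ≤ |a|, then |a| = (1/√2)(|ζ|² + |⟨ζ,ζ⟩|)^{1/2}, |b| = (1/√2)(|ζ|² − |⟨ζ,ζ⟩|)^{1/2}, and |ζ|_c = |a| + |b|. (b) For every ζ ∈ ℂ^n, writing ζ = ξ + iη with ξ, η ∈ ℝ^n, one has |ζ|_c = (|ζ|² + (|ζ|⁴ − |⟨ζ,ζ⟩|²)^{1/2})^{1/2} = (|ζ|² + 2(|ξ|²|η|² − ⟨ξ,η⟩²)^{1/2})^{1/2}. -/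

import Mathlib

open scoped ENNReal RealInnerProductSpace BigOperators
open Filter MeasureTheory

noncomputable section

/-- ℂⁿ with the hermitian (euclidean) norm. -/
abbrev Cn (n : ℕ) := EuclideanSpace ℂ (Fin n)
/-- ℝⁿ with the euclidean norm. -/
abbrev Rn (n : ℕ) := EuclideanSpace ℝ (Fin n)

/-- The inclusion ℝⁿ ⊆ ℂⁿ. -/
def toCn {n : ℕ} (x : Rn n) : Cn n := WithLp.toLp 2 (fun i => (x i : ℂ))

/-- Evaluation of a polynomial on ℂⁿ at a point of ℂⁿ. -/
def evalP {n : ℕ} (p : MvPolynomial (Fin n) ℂ) (ζ : Cn n) : ℂ :=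
  MvPolynomial.eval (fun i => ζ i) p

/-- Siciak's homogeneous extremal function with weight `γ`:
`Ψ_{E,γ}(ζ) = sup{ |p(ζ)|^{1/k} : p homogeneous of degree k ≥ 1, |p|^{1/k} ≤ γ on E }`. -/
def siciak {n : ℕ} (E : Set (Cn n)) (γ : Cn n → ℝ) (ζ : Cn n) : ℝ≥0∞ :=
  ⨆ (p : MvPolynomial (Fin n) ℂ) (k : ℕ) (_ : p.IsHomogeneous k) (_ : 1 ≤ k)
    (_ : ∀ ξ ∈ E, ‖evalP p ξ‖ ^ (1 / (k : ℝ)) ≤ γ ξ),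
    ENNReal.ofReal (‖evalP p ζ‖ ^ (1 / (k : ℝ)))

/-- The upper semicontinuous regularization `Ψ^*(ζ) = limsup_{ϑ → ζ} Ψ(ϑ)`. -/
def siciakStar {n : ℕ} (E : Set (Cn n)) (γ : Cn n → ℝ) (ζ : Cn n) : ℝ≥0∞ :=
  Filter.limsup (siciak E γ) (nhds ζ)

/-- `E` has positive homogeneous capacity in the sense of Siciak:
`Ψ_E^*` is bounded above on the unit sphere of ℂⁿ. -/
def PosHomCapacity {n : ℕ} (E : Set (Cn n)) : Prop :=
  ∃ M : ℝ, ∀ ζ : Cn n, ‖ζ‖ = 1 → siciakStar E (fun _ => 1) ζ ≤ ENNReal.ofReal M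

end

noncomputable section

/-- The cross norm on ℂⁿ associated to a norm `ν` on ℝⁿ. -/
def crossNorm {n : ℕ} (ν : Rn n → ℝ) (ζ : Cn n) : ℝ :=
  sInf { s : ℝ | ∃ (N : ℕ) (α : Fin N → ℂ) (ω : Fin N → Rn n),
    ζ = ∑ j, α j • toCn (ω j) ∧ s = ∑ j, ‖α j‖ * ν (ω j) }

/-- The complex bilinear form `⟨z,ζ⟩ = Σ_j z_j ζ_j` on ℂⁿ. -/
def bform {n : ℕ} (z w : Cn n) : ℂ := ∑ j, z j * w j

/-- The real part `Re ζ ∈ ℝⁿ` of a point of ℂⁿ. -/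
def rePart {n : ℕ} (ζ : Cn n) : Rn n := WithLp.toLp 2 (fun i => (ζ i).re)

/-- The imaginary part `Im ζ ∈ ℝⁿ` of a point of ℂⁿ. -/
def imPart {n : ℕ} (ζ : Cn n) : Rn n := WithLp.toLp 2 (fun i => (ζ i).im)

/-! Choosing θ = arg⟨ζ,ζ⟩/2 makes e^{-2iθ}⟨ζ,ζ⟩ real, i.e. writes ζ = e^{iθ}(a + ib) with
⟨a,b⟩ = 0. Unimodular factors do not change the cross norm, and for orthogonal a, b it equals
|a| + |b|. The decomposition
`a + ib = ½(√|a| + i√|b|)(a/√|a| + b/√|b|) + ½(√|a| − i√|b|)(a/√|a| − b/√|b|)`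
costs exactly |a| + |b|. Conversely, pairing a decomposition `Σ α_j ω_j` with the real functional
`z ↦ ⟨a/|a|, Re z⟩ + ⟨b/|b|, Im z⟩`, which is bounded by `|α||ω|` on `α ω` because the two unit
vectors are orthogonal, shows that no decomposition costs less. The formulas then follow from
`|ζ|² = |a|² + |b|²`, `|⟨ζ,ζ⟩| = ||a|² − |b|²|` and the Lagrange-type identity
`|ζ|⁴ − |⟨ζ,ζ⟩|² = 4(|ξ|²|η|² − ⟨ξ,η⟩²)`. -/

section Coordinates

variable {n : ℕ}

@[simp] lemma toCn_apply (x : Rn n) (i : Fin n) : toCn x i = (x i : ℂ) := rfl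

lemma toCn_add (x y : Rn n) : toCn (x + y) = toCn x + toCn y := by
  ext i; simp

lemma toCn_sub (x y : Rn n) : toCn (x - y) = toCn x - toCn y := by
  ext i; simp

lemma toCn_smul (r : ℝ) (x : Rn n) : toCn (r • x) = (r : ℂ) • toCn x := by
  ext i; simp

lemma rePart_sum_smul_toCn {N : ℕ} (α : Fin N → ℂ) (ω : Fin N → Rn n) :
    rePart (∑ j, α j • toCn (ω j)) = ∑ j, (α j).re • ω j := by
  ext i; simp [rePart, Complex.re_sum]

lemma imPart_sum_smul_toCn {N : ℕ} (α : Fin N → ℂ) (ω : Fin N → Rn n) :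
    imPart (∑ j, α j • toCn (ω j)) = ∑ j, (α j).im • ω j := by
  ext i; simp [imPart, Complex.im_sum]

@[simp] lemma rePart_toCn_add_I_smul (a b : Rn n) : rePart (toCn a + Complex.I • toCn b) = a := by
  ext i; simp [rePart]

@[simp] lemma imPart_toCn_add_I_smul (a b : Rn n) : imPart (toCn a + Complex.I • toCn b) = b := by
  ext i; simp [imPart]

lemma toCn_rePart_add_I_smul_toCn_imPart (ζ : Cn n) :
    toCn (rePart ζ) + Complex.I • toCn (imPart ζ) = ζ := by
  ext i; simp [rePart, imPart, mul_comm Complex.I]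

lemma norm_toCn_add_I_smul_sq (a b : Rn n) :
    ‖toCn a + Complex.I • toCn b‖ ^ 2 = ‖a‖ ^ 2 + ‖b‖ ^ 2 := by
  simp only [EuclideanSpace.norm_sq_eq, ← Finset.sum_add_distrib]
  refine Finset.sum_congr rfl fun i _ => ?_
  simp only [PiLp.add_apply, PiLp.smul_apply, toCn_apply, smul_eq_mul, Real.norm_eq_abs, sq_abs]
  rw [mul_comm, Complex.norm_add_mul_I, Real.sq_sqrt (by positivity)]

lemma bform_toCn_add_I_smul (a b : Rn n) :
    bform (toCn a + Complex.I • toCn b) (toCn a + Complex.I • toCn b)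
      = ⟨‖a‖ ^ 2 - ‖b‖ ^ 2, 2 * ⟪a, b⟫⟩ := by
  simp only [bform, EuclideanSpace.norm_sq_eq, PiLp.inner_apply]
  apply Complex.ext <;>
    simp [Complex.re_sum, Complex.im_sum, Finset.mul_sum, ← Finset.sum_sub_distrib] <;>
    refine Finset.sum_congr rfl fun i _ => ?_ <;> ring

lemma bform_smul_self (c : ℂ) (z : Cn n) : bform (c • z) (c • z) = c ^ 2 * bform z z := by
  simp only [bform, PiLp.smul_apply, smul_eq_mul, Finset.mul_sum]
  exact Finset.sum_congr rfl fun i _ => by ring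

end Coordinates

section Normalize

variable {E : Type*} [NormedAddCommGroup E] [InnerProductSpace ℝ E]

lemma norm_inv_norm_smul_le_one (x : E) : ‖‖x‖⁻¹ • x‖ ≤ 1 := by
  rw [norm_smul, norm_inv, norm_norm]
  exact inv_mul_le_one_of_le₀ le_rfl (norm_nonneg x)

lemma real_inner_inv_norm_smul_self (x : E) : ⟪‖x‖⁻¹ • x, x⟫ = ‖x‖ := by
  rw [real_inner_smul_left, real_inner_self_eq_norm_sq, sq, ← mul_assoc, inv_mul_mul_self]

lemma norm_inv_sqrt_norm_smul (x : E) : ‖(√‖x‖)⁻¹ • x‖ = √‖x‖ := by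
  rw [norm_smul, norm_inv, Real.norm_of_nonneg (Real.sqrt_nonneg _), ← div_eq_inv_mul,
    Real.div_sqrt]

lemma sqrt_norm_smul_inv_sqrt_norm_smul (x : E) : √‖x‖ • (√‖x‖)⁻¹ • x = x := by
  rcases eq_or_ne x 0 with rfl | hx
  · simp
  · exact smul_inv_smul₀ (by positivity) x

lemma norm_re_smul_add_im_smul_le {u v : E} (hu : ‖u‖ ≤ 1) (hv : ‖v‖ ≤ 1) (huv : ⟪u, v⟫ = 0)
    (z : ℂ) : ‖z.re • u + z.im • v‖ ≤ ‖z‖ := by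
  have horth : ⟪z.re • u, z.im • v⟫ = 0 := by
    rw [real_inner_smul_left, real_inner_smul_right, huv, mul_zero, mul_zero]
  rw [norm_add_eq_sqrt_iff_real_inner_eq_zero.2 horth, Complex.norm_eq_sqrt_sq_add_sq]
  gcongr <;> rw [norm_smul, ← sq, mul_pow, Real.norm_eq_abs, sq_abs] <;>
    exact mul_le_of_le_one_right (sq_nonneg _) (pow_le_one₀ (norm_nonneg _) ‹_›)

end Normalize

section CrossNorm

variable {n : ℕ}

def crossCosts (ν : Rn n → ℝ) (ζ : Cn n) : Set ℝ :=
  { s : ℝ | ∃ (N : ℕ) (α : Fin N → ℂ) (ω : Fin N → Rn n),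
    ζ = ∑ j, α j • toCn (ω j) ∧ s = ∑ j, ‖α j‖ * ν (ω j) }

lemma crossNorm_eq_sInf_crossCosts (ν : Rn n → ℝ) (ζ : Cn n) :
    crossNorm ν ζ = sInf (crossCosts ν ζ) := rfl

lemma crossCosts_subset_smul (ν : Rn n → ℝ) {c : ℂ} (hc : ‖c‖ = 1) (ζ : Cn n) :
    crossCosts ν ζ ⊆ crossCosts ν (c • ζ) := by
  rintro s ⟨N, α, ω, rfl, rfl⟩
  refine ⟨N, fun j => c * α j, ω, ?_, ?_⟩
  · simp only [Finset.smul_sum, smul_smul]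
  · simp only [norm_mul, hc, one_mul]

lemma crossCosts_smul (ν : Rn n → ℝ) {c : ℂ} (hc : ‖c‖ = 1) (ζ : Cn n) :
    crossCosts ν (c • ζ) = crossCosts ν ζ := by
  have hc0 : c ≠ 0 := norm_ne_zero_iff.1 (by rw [hc]; exact one_ne_zero)
  refine (Set.Subset.antisymm ?_ (crossCosts_subset_smul ν hc ζ))
  simpa [inv_smul_smul₀ hc0] using crossCosts_subset_smul ν (c := c⁻¹) (by simp [hc]) (c • ζ)

lemma crossNorm_smul (ν : Rn n → ℝ) {c : ℂ} (hc : ‖c‖ = 1) (ζ : Cn n) :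
    crossNorm ν (c • ζ) = crossNorm ν ζ := by
  simp only [crossNorm_eq_sInf_crossCosts, crossCosts_smul ν hc]

lemma norm_add_norm_le_of_eq_sum {a b : Rn n} (hab : ⟪a, b⟫ = 0) {N : ℕ} {α : Fin N → ℂ}
    {ω : Fin N → Rn n} (h : toCn a + Complex.I • toCn b = ∑ j, α j • toCn (ω j)) :
    ‖a‖ + ‖b‖ ≤ ∑ j, ‖α j‖ * ‖ω j‖ := by
  -- `u = 0` when `a = 0`; only `‖u‖ ≤ 1` and `⟪u, a⟫ = ‖a‖` matter below.
  set u := ‖a‖⁻¹ • a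
  set v := ‖b‖⁻¹ • b
  have huv : ⟪u, v⟫ = 0 := by
    rw [real_inner_smul_left, real_inner_smul_right, hab, mul_zero, mul_zero]
  have ha : a = ∑ j, (α j).re • ω j := by
    simpa using congrArg rePart h |>.trans (rePart_sum_smul_toCn α ω)
  have hb : b = ∑ j, (α j).im • ω j := by
    simpa using congrArg imPart h |>.trans (imPart_sum_smul_toCn α ω)
  calc ‖a‖ + ‖b‖ = ⟪u, a⟫ + ⟪v, b⟫ := by
        rw [real_inner_inv_norm_smul_self, real_inner_inv_norm_smul_self]
    _ = ∑ j, ⟪(α j).re • u + (α j).im • v, ω j⟫ := by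
        conv_lhs => rw [ha, hb]
        simp only [inner_sum, inner_add_left, real_inner_smul_left, real_inner_smul_right,
          Finset.sum_add_distrib]
    _ ≤ ∑ j, ‖α j‖ * ‖ω j‖ := by
        gcongr with j
        exact (real_inner_le_norm _ _).trans (mul_le_mul_of_nonneg_right
          (norm_re_smul_add_im_smul_le (norm_inv_norm_smul_le_one a)
            (norm_inv_norm_smul_le_one b) huv (α j)) (norm_nonneg _))

lemma norm_add_norm_mem_crossCosts {a b : Rn n} (hab : ⟪a, b⟫ = 0) :
    ‖a‖ + ‖b‖ ∈ crossCosts (fun x => ‖x‖) (toCn a + Complex.I • toCn b) := by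
  set s := √‖a‖
  set r := √‖b‖
  have horth : ⟪s⁻¹ • a, r⁻¹ • b⟫ = 0 := by
    rw [real_inner_smul_left, real_inner_smul_right, hab, mul_zero, mul_zero]
  have hω_add : ‖s⁻¹ • a + r⁻¹ • b‖ = √(‖a‖ + ‖b‖) := by
    rw [norm_add_eq_sqrt_iff_real_inner_eq_zero.2 horth]
    simp only [s, r, norm_inv_sqrt_norm_smul, Real.mul_self_sqrt (norm_nonneg _)]
  have hω_sub : ‖s⁻¹ • a - r⁻¹ • b‖ = √(‖a‖ + ‖b‖) := by
    rw [norm_sub_eq_sqrt_iff_real_inner_eq_zero.2 horth]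
    simp only [s, r, norm_inv_sqrt_norm_smul, Real.mul_self_sqrt (norm_nonneg _)]
  have hα : ∀ t : ℝ, t ^ 2 = ‖b‖ → ‖((s : ℂ) + t * Complex.I) / 2‖ = √(‖a‖ + ‖b‖) / 2 := by
    intro t ht
    rw [norm_div, Complex.norm_add_mul_I, ht, Real.sq_sqrt (norm_nonneg _)]
    norm_num
  refine ⟨2, ![((s : ℂ) + r * Complex.I) / 2, ((s : ℂ) + (-r : ℝ) * Complex.I) / 2],
    ![s⁻¹ • a + r⁻¹ • b, s⁻¹ • a - r⁻¹ • b], ?_, ?_⟩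
  · conv_lhs => rw [← sqrt_norm_smul_inv_sqrt_norm_smul a, ← sqrt_norm_smul_inv_sqrt_norm_smul b]
    simp only [Fin.sum_univ_two, Matrix.cons_val_zero, Matrix.cons_val_one, toCn_add, toCn_sub,
      toCn_smul]
    push_cast
    module
  · simp only [Fin.sum_univ_two, Matrix.cons_val_zero, Matrix.cons_val_one,
      hα r (Real.sq_sqrt (norm_nonneg _)), hα (-r) (by rw [neg_sq, Real.sq_sqrt (norm_nonneg _)]),
      hω_add, hω_sub]
    linarith [Real.mul_self_sqrt (add_nonneg (norm_nonneg a) (norm_nonneg b))]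

lemma crossNorm_toCn_add_I_smul {a b : Rn n} (hab : ⟪a, b⟫ = 0) :
    crossNorm (fun x => ‖x‖) (toCn a + Complex.I • toCn b) = ‖a‖ + ‖b‖ :=
  IsLeast.csInf_eq ⟨norm_add_norm_mem_crossCosts hab,
    fun _ ⟨_, _, _, hdecomp, hcost⟩ => hcost ▸ norm_add_norm_le_of_eq_sum hab hdecomp⟩

end CrossNorm

section Rotation

variable {n : ℕ}

lemma norm_exp_mul_I_smul (θ : ℝ) (z : Cn n) : ‖Complex.exp (θ * Complex.I) • z‖ = ‖z‖ := by
  rw [norm_smul, Complex.norm_exp_ofReal_mul_I, one_mul]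

lemma norm_bform_exp_mul_I_smul (θ : ℝ) (z : Cn n) :
    ‖bform (Complex.exp (θ * Complex.I) • z) (Complex.exp (θ * Complex.I) • z)‖
      = ‖bform z z‖ := by
  rw [bform_smul_self, norm_mul, norm_pow, Complex.norm_exp_ofReal_mul_I, one_pow, one_mul]

lemma norm_bform_toCn_add_I_smul {a b : Rn n} (hab : ⟪a, b⟫ = 0) :
    ‖bform (toCn a + Complex.I • toCn b) (toCn a + Complex.I • toCn b)‖ = |‖a‖ ^ 2 - ‖b‖ ^ 2| := by
  rw [bform_toCn_add_I_smul, hab, mul_zero, Complex.norm_eq_sqrt_sq_add_sq]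
  simp [Real.sqrt_sq_eq_abs]

lemma norm_pow_four_sub_norm_bform_sq (ζ : Cn n) :
    ‖ζ‖ ^ 4 - ‖bform ζ ζ‖ ^ 2
      = 4 * (‖rePart ζ‖ ^ 2 * ‖imPart ζ‖ ^ 2 - ⟪rePart ζ, imPart ζ⟫ ^ 2) := by
  conv_lhs => rw [← toCn_rePart_add_I_smul_toCn_imPart ζ]
  rw [show (4 : ℕ) = 2 * 2 from rfl, pow_mul, norm_toCn_add_I_smul_sq, bform_toCn_add_I_smul,
    Complex.sq_norm, Complex.normSq_mk]
  ring

lemma exists_eq_exp_mul_I_smul_of_inner_eq_zero (ζ : Cn n) :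
    ∃ (θ : ℝ) (a b : Rn n), ⟪a, b⟫ = 0 ∧
      ζ = Complex.exp (θ * Complex.I) • (toCn a + Complex.I • toCn b) := by
  set θ : ℝ := (bform ζ ζ).arg / 2
  set w := Complex.exp (-θ * Complex.I) • ζ
  refine ⟨θ, rePart w, imPart w, ?_, ?_⟩
  · have hw : bform w w = ‖bform ζ ζ‖ := by
      conv_rhs => rw [← mul_one (‖bform ζ ζ‖ : ℂ)]
      rw [bform_smul_self, ← Complex.exp_nat_mul]
      nth_rewrite 1 [← Complex.norm_mul_exp_arg_mul_I (bform ζ ζ)]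
      rw [mul_left_comm, ← Complex.exp_add, ← Complex.exp_zero]
      congr 2
      simp only [θ]; push_cast; ring
    have := congrArg Complex.im hw
    rw [← toCn_rePart_add_I_smul_toCn_imPart w, bform_toCn_add_I_smul] at this
    simpa using this
  · rw [toCn_rePart_add_I_smul_toCn_imPart, smul_smul, ← Complex.exp_add]
    simp

lemma crossNorm_eq_sqrt (ζ : Cn n) :
    crossNorm (fun x => ‖x‖) ζ = √(‖ζ‖ ^ 2 + √(‖ζ‖ ^ 4 - ‖bform ζ ζ‖ ^ 2)) := by
  obtain ⟨θ, a, b, hab, rfl⟩ := exists_eq_exp_mul_I_smul_of_inner_eq_zero ζ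
  have hdisc := norm_pow_four_sub_norm_bform_sq (toCn a + Complex.I • toCn b)
  simp only [rePart_toCn_add_I_smul, imPart_toCn_add_I_smul, hab] at hdisc
  rw [crossNorm_smul _ (Complex.norm_exp_ofReal_mul_I θ), crossNorm_toCn_add_I_smul hab,
    norm_bform_exp_mul_I_smul, norm_exp_mul_I_smul, hdisc, norm_toCn_add_I_smul_sq,
    show 4 * (‖a‖ ^ 2 * ‖b‖ ^ 2 - 0 ^ 2) = (2 * ‖a‖ * ‖b‖) ^ 2 by ring,
    Real.sqrt_sq (by positivity), show ‖a‖ ^ 2 + ‖b‖ ^ 2 + 2 * ‖a‖ * ‖b‖ = (‖a‖ + ‖b‖) ^ 2 by ring,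
    Real.sqrt_sq (by positivity)]

end Rotation

lemma eq_inv_sqrt_two_mul_sqrt {x : ℝ} (hx : 0 ≤ x) : x = 1 / √2 * √(2 * x ^ 2) := by
  rw [Real.sqrt_mul zero_le_two, Real.sqrt_sq hx]
  field_simp

/-- Theorem 2.6: explicit formulas for the cross norm of the euclidean norm. -/
theorem crossNorm_formulas {n : ℕ} :
    -- (a)
    (∀ (θ : ℝ) (a b : Rn n) (ζ : Cn n), ⟪a, b⟫ = 0 → ‖b‖ ≤ ‖a‖ →
      ζ = Complex.exp (θ * Complex.I) • (toCn a + Complex.I • toCn b) →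
      ‖a‖ = (1 / Real.sqrt 2) * Real.sqrt (‖ζ‖ ^ 2 + ‖bform ζ ζ‖) ∧
      ‖b‖ = (1 / Real.sqrt 2) * Real.sqrt (‖ζ‖ ^ 2 - ‖bform ζ ζ‖) ∧
      crossNorm (fun x => ‖x‖) ζ = ‖a‖ + ‖b‖) ∧
    -- (b)
    (∀ ζ : Cn n,
      crossNorm (fun x => ‖x‖) ζ =
        Real.sqrt (‖ζ‖ ^ 2 + Real.sqrt (‖ζ‖ ^ 4 - ‖bform ζ ζ‖ ^ 2)) ∧
      crossNorm (fun x => ‖x‖) ζ =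
        Real.sqrt (‖ζ‖ ^ 2 +
          2 * Real.sqrt (‖rePart ζ‖ ^ 2 * ‖imPart ζ‖ ^ 2 - ⟪rePart ζ, imPart ζ⟫ ^ 2))) := by
  refine ⟨?_, fun ζ => ⟨crossNorm_eq_sqrt ζ, ?_⟩⟩
  · rintro θ a b ζ hab hba rfl
    have hnorm := norm_toCn_add_I_smul_sq a b
    have hbform := norm_bform_toCn_add_I_smul hab
    rw [abs_of_nonneg (sub_nonneg.2 (pow_le_pow_left₀ (norm_nonneg b) hba 2))] at hbform
    rw [norm_exp_mul_I_smul, norm_bform_exp_mul_I_smul, hnorm, hbform,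
      crossNorm_smul _ (Complex.norm_exp_ofReal_mul_I θ), crossNorm_toCn_add_I_smul hab]
    refine ⟨?_, ?_, rfl⟩
    · convert eq_inv_sqrt_two_mul_sqrt (norm_nonneg a) using 3; ring
    · convert eq_inv_sqrt_two_mul_sqrt (norm_nonneg b) using 3; ring
  · rw [crossNorm_eq_sqrt, norm_pow_four_sub_norm_bform_sq, Real.sqrt_mul zero_le_four,
      show (4 : ℝ) = 2 ^ 2 by norm_num, Real.sqrt_sq zero_le_two]
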